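/- arXiv:1711.00502 — 3 statements merged into one kernel-verified Lean document; each statement's English description precedes it below -/
import Mathlib

section
/- Fix α ∈ (0,1), ρ > 0, γ > 0, and a positive integer L. For any h ∈ ℂ^L with ‖h‖² = γ, the single-user achievable rate R(h) = log₂(1 + αρ‖h‖⁴ / (ρ(1−α)∑_{i=1}^L |h_i|^4 + ‖h‖²)) satisfies R(h) ≤ log₂(1 + αρ / (ρ(1−α)/L + 1/γ)), with equality when |h_i|² = γ/L for all i. -/
open Real

/-- Single-user achievable-rate upper bound under AQNM quantization, with
equality at equal power spread. -/
theorem stmt_2 (α ρ γ : ℝ) (hα : α ∈ Set.Ioo (0:ℝ) 1) (hρ : 0 < ρ) (hγ : 0 < γ)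
    (L : ℕ) (hL : 0 < L) (h : Fin L → ℂ) (hnorm : ∑ i, ‖h i‖ ^ 2 = γ) :
    logb 2 (1 + α * ρ * (∑ i, ‖h i‖ ^ 2) ^ 2 /
        (ρ * (1 - α) * (∑ i, ‖h i‖ ^ 4) + ∑ i, ‖h i‖ ^ 2)) ≤
      logb 2 (1 + α * ρ / (ρ * (1 - α) / L + 1 / γ)) ∧
    ((∀ i, ‖h i‖ ^ 2 = γ / L) →
      logb 2 (1 + α * ρ * (∑ i, ‖h i‖ ^ 2) ^ 2 /
          (ρ * (1 - α) * (∑ i, ‖h i‖ ^ 4) + ∑ i, ‖h i‖ ^ 2)) =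
        logb 2 (1 + α * ρ / (ρ * (1 - α) / L + 1 / γ))) := by
  obtain ⟨hα0, hα1⟩ := hα
  have hLpos : (0:ℝ) < L := Nat.cast_pos.mpr hL
  have h4 : ∀ i, ‖h i‖ ^ 4 = (‖h i‖ ^ 2) ^ 2 := fun i => by ring
  -- Cauchy–Schwarz: γ² ≤ L * ∑ (‖h i‖²)²
  have hCS : γ ^ 2 ≤ (L : ℝ) * ∑ i, (‖h i‖ ^ 2) ^ 2 := by
    have := sq_sum_le_card_mul_sum_sq (s := Finset.univ) (f := fun i => ‖h i‖ ^ 2)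
    rw [← hnorm]
    simpa using this
  have hS : γ ^ 2 / L ≤ ∑ i, ‖h i‖ ^ 4 := by
    rw [div_le_iff₀ hLpos]
    simp only [h4]
    linarith [hCS]
  set S := ∑ i, ‖h i‖ ^ 4 with hSdef
  have hSnonneg : 0 ≤ S := Finset.sum_nonneg fun i _ => by positivity
  have hα' : 0 < 1 - α := by linarith
  -- RHS fraction rewritten
  have hRHS : α * ρ / (ρ * (1 - α) / L + 1 / γ)
      = α * ρ * γ ^ 2 / (ρ * (1 - α) * (γ ^ 2 / L) + γ) := by
    rw [div_eq_div_iff]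
    · field_simp
    · positivity
    · positivity
  have hD2pos : 0 < ρ * (1 - α) * (γ ^ 2 / L) + γ := by positivity
  have hfrac : α * ρ * γ ^ 2 / (ρ * (1 - α) * S + γ)
      ≤ α * ρ * γ ^ 2 / (ρ * (1 - α) * (γ ^ 2 / L) + γ) := by
    apply div_le_div_of_nonneg_left (by positivity) hD2pos
    have : ρ * (1 - α) * (γ ^ 2 / L) ≤ ρ * (1 - α) * S :=
      mul_le_mul_of_nonneg_left hS (by positivity)
    linarith
  constructor
  · have hLHSpos : (0:ℝ) < 1 + α * ρ * γ ^ 2 / (ρ * (1 - α) * S + γ) := by positivity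
    apply Real.logb_le_logb_of_le one_lt_two (by rwa [hnorm])
    rw [hnorm, hRHS]
    linarith [hfrac]
  · intro heq
    have hSval : S = γ ^ 2 / L := by
      rw [hSdef]
      simp only [h4, heq]
      rw [Finset.sum_const, Finset.card_univ, Fintype.card_fin, nsmul_eq_mul]
      field_simp
    rw [hnorm, hRHS, hSval]
end

section
/- Fix α ∈ (0,1), ρ > 0, γ > 0, positive integers L, K, n with LK ≤ n. Let h₁,...,h_K ∈ ℂ^n each have exactly L nonzero entries, pairwise disjoint supports, ‖h_k‖² = γ, and |(h_k)_i|² = γ/L on the support of h_k. Then for each k, with w_k = h_k/‖h_k‖² and D = diag(ρ H Hᴴ + (1/(1−α)) I) where H = [h₁,...,h_K], the rate R_k = log₂(1 + αρ / ((1−α) w_kᴴ D w_k)) equals log₂(1 + αρ / (ρ(1−α)/L + 1/γ)). -/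
open Real

/-- With disjoint supports (unique AoAs), exactly L nonzero entries of equal
power γ/L per user, every scheduled user achieves the maximal single-user rate
under the AQNM zero-forcing model. -/
theorem stmt_9 (α ρ γ : ℝ) (hα : α ∈ Set.Ioo (0:ℝ) 1) (hρ : 0 < ρ) (hγ : 0 < γ)
    (L K n : ℕ) (hL : 0 < L) (hK : 0 < K) (hn : 0 < n) (hLK : L * K ≤ n)
    (h : Fin K → Fin n → ℂ)
    (hsupp : ∀ k, {i : Fin n | h k i ≠ 0}.ncard = L)
    (hdisj : ∀ k k', k ≠ k' → ∀ i, h k i ≠ 0 → h k' i = 0)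
    (hnorm : ∀ k, ∑ i, ‖h k i‖ ^ 2 = γ)
    (hspread : ∀ k i, h k i ≠ 0 → ‖h k i‖ ^ 2 = γ / L) :
    ∀ k : Fin K,
      logb 2 (1 + α * ρ / ((1 - α) *
          ∑ i, ‖(γ⁻¹ • h k) i‖ ^ 2 *
            (ρ * (∑ u, ‖h u i‖ ^ 2) + 1 / (1 - α)))) =
        logb 2 (1 + α * ρ / (ρ * (1 - α) / L + 1 / γ)) := by
  classical
  intro k
  have hα1 : (1:ℝ) - α ≠ 0 := by have := hα.2; linarith
  have hγ' : γ ≠ 0 := hγ.ne'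
  have hL' : (L:ℝ) ≠ 0 := Nat.cast_ne_zero.mpr hL.ne'
  have key : ∀ i, ‖(γ⁻¹ • h k) i‖ ^ 2 * (ρ * (∑ u, ‖h u i‖ ^ 2) + 1 / (1 - α))
      = if h k i ≠ 0 then γ⁻¹ ^ 2 * (γ / L) * (ρ * (γ / L) + 1 / (1 - α)) else 0 := by
    intro i
    by_cases hi : h k i = 0
    · simp [hi]
    · rw [if_pos hi]
      have h1 : ∑ u, ‖h u i‖ ^ 2 = γ / L := by
        rw [Finset.sum_eq_single k]
        · exact hspread k i hi
        · intro u _ hu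
          by_contra hc
          have : h u i ≠ 0 := fun h0 => hc (by simp [h0])
          exact hi (hdisj u k hu i this)
        · intro hk; exact absurd (Finset.mem_univ k) hk
      have h2 : ‖(γ⁻¹ • h k) i‖ ^ 2 = γ⁻¹ ^ 2 * (γ / L) := by
        have : ‖(γ⁻¹ • h k) i‖ = |γ⁻¹| * ‖h k i‖ := by
          simp [Pi.smul_apply, norm_smul, abs_inv]
        rw [this, mul_pow, sq_abs, hspread k i hi]
      rw [h1, h2]
  have hcard : (Finset.univ.filter (fun i : Fin n => h k i ≠ 0)).card = L := by
    have := hsupp k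
    rwa [Set.ncard_eq_toFinset_card', Set.toFinset_setOf] at this
  have hsum : ∑ i, ‖(γ⁻¹ • h k) i‖ ^ 2 * (ρ * (∑ u, ‖h u i‖ ^ 2) + 1 / (1 - α))
      = ρ / L + 1 / (γ * (1 - α)) := by
    rw [Finset.sum_congr rfl (fun i _ => key i), Finset.sum_ite, Finset.sum_const,
      Finset.sum_const_zero, add_zero, hcard, nsmul_eq_mul]
    field_simp
  rw [hsum, show (1 - α) * (ρ / ↑L + 1 / (γ * (1 - α))) = ρ * (1 - α) / ↑L + 1 / γ from by
    field_simp]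
end

section
/- Fix α ∈ (0,1), ρ > 0, γ > 0, and positive integers L ≤ n. For any h ∈ ℂ^n with ‖h‖² = γ and at most L nonzero entries, and for any H ∈ ℂ^{n×K} whose k-th column is h, the per-user rate under channel orthogonality satisfies log₂(1 + αργ² / (ρ(1−α) h ᴴ diag(H Hᴴ) h / 1 + γ)) ≤ log₂(1 + αρ / (ρ(1−α)/L + 1/γ)), where hᴴ diag(H Hᴴ) h ≥ ∑_i |h_i|^4 ≥ γ²/L. -/
open Real

/-- Uniform per-user rate upper bound (Proposition 2): combining the overlap
inequality and the power-spread inequality. -/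
theorem stmt_10 (α ρ γ : ℝ) (hα : α ∈ Set.Ioo (0:ℝ) 1) (hρ : 0 < ρ) (hγ : 0 < γ)
    (L n K : ℕ) (hL : 0 < L) (hLn : L ≤ n)
    (h : Fin n → ℂ) (hnorm : ∑ i, ‖h i‖ ^ 2 = γ)
    (hsupp : {i : Fin n | h i ≠ 0}.ncard ≤ L)
    (H : Matrix (Fin n) (Fin K) ℂ) (k : Fin K) (hcol : ∀ i, H i k = h i) :
    logb 2 (1 + α * ρ * γ ^ 2 /
        (ρ * (1 - α) * (∑ i, ‖h i‖ ^ 2 * (∑ u, ‖H i u‖ ^ 2)) + γ)) ≤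
      logb 2 (1 + α * ρ / (ρ * (1 - α) / L + 1 / γ)) ∧
    (∑ i, ‖h i‖ ^ 4) ≤ ∑ i, ‖h i‖ ^ 2 * (∑ u, ‖H i u‖ ^ 2) ∧
    γ ^ 2 / L ≤ ∑ i, ‖h i‖ ^ 4 := by
  obtain ⟨hα0, hα1⟩ := hα
  have h1α : 0 < 1 - α := by linarith
  -- second part
  have h2 : (∑ i, ‖h i‖ ^ 4) ≤ ∑ i, ‖h i‖ ^ 2 * (∑ u, ‖H i u‖ ^ 2) := by
    apply Finset.sum_le_sum
    intro i _
    have h4 : ‖h i‖ ^ 4 = ‖h i‖ ^ 2 * ‖h i‖ ^ 2 := by ring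
    rw [h4]
    apply mul_le_mul_of_nonneg_left _ (by positivity)
    have : ‖h i‖ ^ 2 = ‖H i k‖ ^ 2 := by rw [hcol]
    rw [this]
    exact Finset.single_le_sum (f := fun u => ‖H i u‖ ^ 2) (fun u _ => by positivity) (Finset.mem_univ k)
  -- third part: Cauchy-Schwarz on support
  have h3 : γ ^ 2 / L ≤ ∑ i, ‖h i‖ ^ 4 := by
    set s : Finset (Fin n) := Finset.univ.filter (fun i => h i ≠ 0) with hs
    have hcard : (s.card : ℝ) ≤ L := by
      have : {i : Fin n | h i ≠ 0}.ncard = s.card := by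
        rw [Set.ncard_eq_toFinset_card']
        congr 1
        ext i
        simp [hs]
      exact_mod_cast this ▸ Nat.cast_le.mpr hsupp
    have hsum2 : ∑ i ∈ s, ‖h i‖ ^ 2 = γ := by
      rw [← hnorm]
      apply Finset.sum_filter_of_ne
      intro i _ hne hz
      exact hne (by simp [hz])
    have hsum4 : ∑ i ∈ s, ‖h i‖ ^ 4 = ∑ i, ‖h i‖ ^ 4 := by
      apply Finset.sum_filter_of_ne
      intro i _ hne hz
      exact hne (by simp [hz])
    have hcs : (∑ i ∈ s, ‖h i‖ ^ 2) ^ 2 ≤ s.card * ∑ i ∈ s, (‖h i‖ ^ 2) ^ 2 :=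
      sq_sum_le_card_mul_sum_sq
    have : γ ^ 2 ≤ L * ∑ i, ‖h i‖ ^ 4 := by
      calc γ ^ 2 = (∑ i ∈ s, ‖h i‖ ^ 2) ^ 2 := by rw [hsum2]
        _ ≤ s.card * ∑ i ∈ s, (‖h i‖ ^ 2) ^ 2 := hcs
        _ = s.card * ∑ i ∈ s, ‖h i‖ ^ 4 := by norm_num [← pow_mul]
        _ ≤ L * ∑ i, ‖h i‖ ^ 4 := by
            rw [hsum4]
            apply mul_le_mul_of_nonneg_right hcard
            positivity
    rw [div_le_iff₀ (by exact_mod_cast hL)] at *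
    · linarith
  refine ⟨?_, h2, h3⟩
  -- first part
  have hLpos : (0:ℝ) < L := by exact_mod_cast hL
  apply logb_le_logb_of_le (by norm_num) (by positivity)
  have key : ρ * (1 - α) * γ ^ 2 / L + γ ≤
      ρ * (1 - α) * (∑ i, ‖h i‖ ^ 2 * (∑ u, ‖H i u‖ ^ 2)) + γ := by
    have : ρ * (1 - α) * (γ ^ 2 / L) ≤
        ρ * (1 - α) * (∑ i, ‖h i‖ ^ 2 * (∑ u, ‖H i u‖ ^ 2)) := by
      apply mul_le_mul_of_nonneg_left (le_trans h3 h2) (by positivity)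
    have e : ρ * (1 - α) * γ ^ 2 / L = ρ * (1 - α) * (γ ^ 2 / L) := by ring
    linarith [e ▸ this]
  have hden1 : (0:ℝ) < ρ * (1 - α) * γ ^ 2 / L + γ := by positivity
  have hden2 : (0:ℝ) < ρ * (1 - α) * (∑ i, ‖h i‖ ^ 2 * (∑ u, ‖H i u‖ ^ 2)) + γ :=
    lt_of_lt_of_le hden1 key
  have hrhs : α * ρ / (ρ * (1 - α) / L + 1 / γ) =
      α * ρ * γ ^ 2 / (ρ * (1 - α) * γ ^ 2 / L + γ) := by
    rw [div_eq_div_iff (by positivity) hden1.ne']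
    field_simp
  rw [hrhs]
  have : α * ρ * γ ^ 2 / (ρ * (1 - α) * (∑ i, ‖h i‖ ^ 2 * (∑ u, ‖H i u‖ ^ 2)) + γ) ≤
      α * ρ * γ ^ 2 / (ρ * (1 - α) * γ ^ 2 / L + γ) :=
    div_le_div_of_nonneg_left (by positivity) hden1 key
  linarith
end
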